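/- For a pure state ψ ∈ ℂ^{d₁} ⊗ ⋯ ⊗ ℂ^{d_n}, the factorization of ψ into a tensor product of non-further-factorizable (across any bipartition of their tensor factors) pure states is unique up to scalar multiples and ordering: if ψ = φ₁ ⊗ ⋯ ⊗ φ_M = χ₁ ⊗ ⋯ ⊗ χ_K are two such factorizations where each factor acts on a subset of the parties and is not a product across any bipartition of its parties, then M = K, the underlying partitions of {1,…,n} coincide, and corresponding factors agree up to nonzero scalars. -/

import Mathlib

/-- A multipartite pure state (given by its amplitude function `ψ` on parties `I` with
local dimensions `D`) is a product across the bipartition `S | Sᶜ`. -/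
def IsProductAcross {I : Type} [Fintype I] [DecidableEq I] {D : I → ℕ}
    (ψ : ((i : I) → Fin (D i)) → ℂ) (S : Finset I) : Prop :=
  ∃ (u : ((i : {i // i ∈ S}) → Fin (D i.1)) → ℂ)
    (v : ((i : {i // i ∉ S}) → Fin (D i.1)) → ℂ),
    ∀ x, ψ x = u (fun i => x i.1) * v (fun i => x i.1)

/-- A multipartite pure state is fully correlated (not further factorizable) if it is
not a product across any nontrivial bipartition of its parties. -/
def FullyCorrelated {I : Type} [Fintype I] [DecidableEq I] {D : I → ℕ}
    (ψ : ((i : I) → Fin (D i)) → ℂ) : Prop :=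
  ∀ S : Finset I, S.Nonempty → S ≠ Finset.univ → ¬ IsProductAcross ψ S

/-! Fix `x₀` with `ψ x₀ ≠ 0`. Freezing every party outside the block of `φ m` at `x₀` exhibits
`φ m`, up to a nonzero constant, as a slice of `ψ`. Since `ψ` is a product across every block of
the second factorization and slices of products are products, full correlation of `φ m` forces
each block of the first partition into a single block of the second; by symmetry the partitions
coincide, and comparing the two slices of `ψ` on a common block gives the scalar. -/

theorem Function.Surjective.exists_equiv_of_eq_iff_eq {α β γ : Type*} {P : α → β} {Q : α → γ}
    (hP : P.Surjective) (hQ : Q.Surjective) (h : ∀ i j, P i = P j ↔ Q i = Q j) :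
    ∃ e : β ≃ γ, ∀ i, Q i = e (P i) :=
  ⟨{ toFun := fun b => Q (surjInv hP b)
     invFun := fun c => P (surjInv hQ c)
     left_inv := fun b => ((h _ _).2 (surjInv_eq hQ _)).trans (surjInv_eq hP b)
     right_inv := fun c => ((h _ _).1 (surjInv_eq hP _)).trans (surjInv_eq hQ c) },
    fun i => ((h _ _).1 (surjInv_eq hP (P i))).symm⟩

section Factorization

open Finset

variable {I ι κ : Type} [Fintype ι] [DecidableEq ι] [Fintype κ] [DecidableEq κ]

theorem apply_eq_mul_prod_of_eq_off_block {X : I → Type*} {ψ : (∀ i, X i) → ℂ}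
    {P : I → ι} {φ : (m : ι) → ((i : {i // P i = m}) → X i) → ℂ}
    (hφ : ∀ x, ψ x = ∏ m, φ m (fun i => x i.1)) (m : ι) {x x₀ : ∀ i, X i}
    (hx : ∀ i, P i ≠ m → x i = x₀ i) :
    ψ x = φ m (fun i => x i.1) * ∏ m' : {m' // m' ≠ m}, φ m' (fun i => x₀ i.1) := by
  rw [hφ, Fintype.prod_eq_mul_prod_subtype_ne _ m]
  exact congrArg _ (prod_congr rfl fun m' _ =>
    congrArg (φ m') (funext fun i => hx _ fun h => m'.2 (i.2.symm.trans h)))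

theorem exists_factor_eq_const_mul_of_same_block {X : I → Type*} {ψ : (∀ i, X i) → ℂ}
    (hψ : ψ ≠ 0) {P : I → ι} {Q : I → κ}
    {φ : (m : ι) → ((i : {i // P i = m}) → X i) → ℂ}
    {χ : (k : κ) → ((i : {i // Q i = k}) → X i) → ℂ}
    (hφ : ∀ x, ψ x = ∏ m, φ m (fun i => x i.1)) (hχ : ∀ x, ψ x = ∏ k, χ k (fun i => x i.1))
    {m : ι} {k : κ} (hmk : ∀ i, P i = m ↔ Q i = k) :
    ∃ c : ℂ, c ≠ 0 ∧ ∀ x : ∀ i, X i, χ k (fun i => x i.1) = c * φ m (fun i => x i.1) := by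
  obtain ⟨x₀, hx₀⟩ := Function.ne_iff.mp hψ
  set A := ∏ m' : {m' // m' ≠ m}, φ m' (fun i => x₀ i.1)
  set B := ∏ k' : {k' // k' ≠ k}, χ k' (fun i => x₀ i.1)
  have hA : A ≠ 0 :=
    right_ne_zero_of_mul (apply_eq_mul_prod_of_eq_off_block hφ m (fun _ _ => rfl) ▸ hx₀)
  have hB : B ≠ 0 :=
    right_ne_zero_of_mul (apply_eq_mul_prod_of_eq_off_block hχ k (fun _ _ => rfl) ▸ hx₀)
  refine ⟨A / B, div_ne_zero hA hB, fun x => ?_⟩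
  let x' i := if P i = m then x i else x₀ i
  have hφx : ψ x' = φ m (fun i => x i.1) * A := by
    rw [apply_eq_mul_prod_of_eq_off_block hφ m (x₀ := x₀) fun i h => if_neg h]
    exact congrArg (φ m · * A) (funext fun i => if_pos i.2)
  have hχx : ψ x' = χ k (fun i => x i.1) * B := by
    rw [apply_eq_mul_prod_of_eq_off_block hχ k (x₀ := x₀) fun i h => if_neg (mt (hmk i).1 h)]
    exact congrArg (χ k · * B) (funext fun i => if_pos ((hmk i).2 i.2))
  rw [div_mul_eq_mul_div, eq_div_iff hB, ← hχx, hφx, mul_comm]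

variable [Fintype I] [DecidableEq I] {D : I → ℕ}

theorem IsProductAcross.const_mul {ψ : (∀ i, Fin (D i)) → ℂ} {S : Finset I}
    (h : IsProductAcross ψ S) (c : ℂ) : IsProductAcross (fun x => c * ψ x) S := by
  obtain ⟨u, v, huv⟩ := h
  exact ⟨fun y => c * u y, v, fun x => by simp only [huv, mul_assoc]⟩

theorem IsProductAcross.slice {ψ : (∀ i, Fin (D i)) → ℂ} {S : Finset I}
    (h : IsProductAcross ψ S) (p : I → Prop) [DecidablePred p] (x₀ : ∀ i, Fin (D i)) :
    IsProductAcross (fun y : ∀ i : {i // p i}, Fin (D i.1) =>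
      ψ (fun i => if hi : p i then y ⟨i, hi⟩ else x₀ i)) (S.subtype p) := by
  obtain ⟨u, v, huv⟩ := h
  exact ⟨fun y => u fun i => if hi : p i.1 then y ⟨⟨i.1, hi⟩, mem_subtype.2 i.2⟩ else x₀ i.1,
    fun y => v fun i => if hi : p i.1 then y ⟨⟨i.1, hi⟩, by simpa using i.2⟩ else x₀ i.1,
    fun y => huv _⟩

theorem isProductAcross_block {ψ : (∀ i, Fin (D i)) → ℂ} {Q : I → κ}
    {χ : (k : κ) → ((i : {i // Q i = k}) → Fin (D i)) → ℂ}
    (hχ : ∀ x, ψ x = ∏ k, χ k (fun i => x i.1)) (k : κ) :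
    IsProductAcross ψ (univ.filter (Q · = k)) :=
  ⟨fun y => χ k fun i => y ⟨i.1, by simpa using i.2⟩,
    fun y => ∏ k' : {k' // k' ≠ k}, χ k' fun i => y ⟨i.1, by simpa [i.2] using k'.2⟩,
    fun x => by rw [hχ, Fintype.prod_eq_mul_prod_subtype_ne _ k]⟩

theorem apply_eq_of_apply_eq_of_fullyCorrelated {ψ : (∀ i, Fin (D i)) → ℂ} (hψ : ψ ≠ 0)
    {P : I → ι} {Q : I → κ}
    {φ : (m : ι) → ((i : {i // P i = m}) → Fin (D i)) → ℂ}
    {χ : (k : κ) → ((i : {i // Q i = k}) → Fin (D i)) → ℂ}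
    (hφ : ∀ x, ψ x = ∏ m, φ m (fun i => x i.1)) (hχ : ∀ x, ψ x = ∏ k, χ k (fun i => x i.1))
    (hφc : ∀ m, FullyCorrelated (φ m)) {i j : I} (hij : P i = P j) : Q i = Q j := by
  obtain ⟨x₀, hx₀⟩ := Function.ne_iff.mp hψ
  set C := ∏ m' : {m' // m' ≠ P i}, φ m' (fun i => x₀ i.1)
  have hC : C ≠ 0 :=
    right_ne_zero_of_mul (apply_eq_mul_prod_of_eq_off_block hφ (P i) (fun _ _ => rfl) ▸ hx₀)
  have hslice : φ (P i) =
      fun y => C⁻¹ * ψ fun i' => if h : P i' = P i then y ⟨i', h⟩ else x₀ i' := by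
    funext y
    have hy : (fun i' : {i' // P i' = P i} =>
        if h : P i'.1 = P i then y ⟨i', h⟩ else x₀ i') = y :=
      funext fun i' => dif_pos i'.2
    rw [apply_eq_mul_prod_of_eq_off_block hφ (P i) (x₀ := x₀) fun i' h => dif_neg h, hy,
      mul_comm, mul_inv_cancel_right₀ hC]
  have hprod : IsProductAcross (φ (P i)) ((univ.filter (Q · = Q i)).subtype (P · = P i)) :=
    hslice ▸ ((isProductAcross_block hχ (Q i)).slice (P · = P i) x₀).const_mul C⁻¹
  by_contra hne
  refine hφc (P i) _ ⟨⟨i, rfl⟩, by simp⟩ (fun h => hne ?_) hprod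
  have hj := mem_univ (⟨j, hij.symm⟩ : {i' // P i' = P i})
  rw [← h] at hj
  simpa [eq_comm] using hj

end Factorization

/-- Uniqueness of the factorization of a pure multipartite state into fully correlated
factors: if a nonzero `ψ` on parties `{1,…,n}` factors both as `φ₁ ⊗ ⋯ ⊗ φ_M` (along
the partition given by `P`) and as `χ₁ ⊗ ⋯ ⊗ χ_K` (along the partition given by `Q`),
with every factor fully correlated, then `M = K`, the two partitions coincide, and
corresponding factors agree up to nonzero scalars. -/
theorem factorization_unique (n M K : ℕ) (d : Fin n → ℕ)
    (ψ : ((i : Fin n) → Fin (d i)) → ℂ) (hψ : ψ ≠ 0)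
    (P : Fin n → Fin M) (hP : Function.Surjective P)
    (Q : Fin n → Fin K) (hQ : Function.Surjective Q)
    (φ : (m : Fin M) → (((i : {i // P i = m}) → Fin (d i.1)) → ℂ))
    (χ : (k : Fin K) → (((i : {i // Q i = k}) → Fin (d i.1)) → ℂ))
    (hφ : ∀ x, ψ x = ∏ m : Fin M, φ m (fun i => x i.1))
    (hχ : ∀ x, ψ x = ∏ k : Fin K, χ k (fun i => x i.1))
    (hφc : ∀ m, FullyCorrelated (φ m)) (hχc : ∀ k, FullyCorrelated (χ k)) :
    M = K ∧ ∀ m : Fin M, ∃ k : Fin K, (∀ i : Fin n, P i = m ↔ Q i = k) ∧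
      ∃ c : ℂ, c ≠ 0 ∧
        ∀ x : (i : Fin n) → Fin (d i), χ k (fun i => x i.1) = c * φ m (fun i => x i.1) := by
  have hPQ : ∀ i j, P i = P j ↔ Q i = Q j := fun i j =>
    ⟨apply_eq_of_apply_eq_of_fullyCorrelated hψ hφ hχ hφc,
      apply_eq_of_apply_eq_of_fullyCorrelated hψ hχ hφ hχc⟩
  obtain ⟨e, he⟩ := hP.exists_equiv_of_eq_iff_eq hQ hPQ
  have hblock : ∀ m i, P i = m ↔ Q i = e m := fun m i => by rw [he, e.apply_eq_iff_eq]
  exact ⟨Fin.equiv_iff_eq.mp ⟨e⟩,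
    fun m => ⟨e m, hblock m, exists_factor_eq_const_mul_of_same_block hψ hφ hχ (hblock m)⟩⟩
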